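/- arXiv:0802.0118 — 2 statements merged into one kernel-verified Lean document; each statement's English description precedes it below -/
import Mathlib

section
/- Let G₁ and G₂ be groups sharing a common subgroup N that is finitely generated, normal in both G₁ and G₂, and topologically embedded in both G₁ and G₂. Then G₁ and G₂ are each topologically embedded in the amalgamated free product G₁ ∗_N G₂. -/
/-- `H` is topologically embedded in `G` via the (injective) homomorphism `f`:
for every finite-index subgroup `K` of `H` there is a finite-index subgroup `L` of `G`
whose preimage under `f` is contained in `K`. -/
def TopologicallyEmbeddedVia {H G : Type*} [Group H] [Group G] (f : H →* G) : Prop :=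
  ∀ K : Subgroup H, K.FiniteIndex → ∃ L : Subgroup G, L.FiniteIndex ∧ L.comap f ≤ K

/-- The amalgamated free product `G₁ ∗_H G₂` of `G₁` and `G₂` over a common subgroup `H`
(given by homomorphisms `f₁ : H →* G₁`, `f₂ : H →* G₂`): the quotient of the free
product `G₁ ∗ G₂` by the normal closure of the elements `f₁(h) · f₂(h)⁻¹`. -/
abbrev AmalgamatedProduct {H G₁ G₂ : Type*} [Group H] [Group G₁] [Group G₂]
    (f₁ : H →* G₁) (f₂ : H →* G₂) : Type _ :=
  (Monoid.Coprod G₁ G₂) ⧸ Subgroup.normalClosure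
    (Set.range fun h : H => Monoid.Coprod.inl (f₁ h) * (Monoid.Coprod.inr (f₂ h))⁻¹)

/-- The canonical homomorphism `G₁ →* G₁ ∗_H G₂`. -/
def AmalgamatedProduct.inl {H G₁ G₂ : Type*} [Group H] [Group G₁] [Group G₂]
    (f₁ : H →* G₁) (f₂ : H →* G₂) : G₁ →* AmalgamatedProduct f₁ f₂ :=
  (QuotientGroup.mk' _).comp Monoid.Coprod.inl

/-- The canonical homomorphism `G₂ →* G₁ ∗_H G₂`. -/
def AmalgamatedProduct.inr {H G₁ G₂ : Type*} [Group H] [Group G₁] [Group G₂]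
    (f₁ : H →* G₁) (f₂ : H →* G₂) : G₂ →* AmalgamatedProduct f₁ f₂ :=
  (QuotientGroup.mk' _).comp Monoid.Coprod.inr

/-!
Given a finite-index `K ≤ G₁`, finite generation of `N` gives a characteristic finite-index
`P ≤ K ∩ N`, which is then normal in both `Gᵢ`. Topological embedding of `N` yields finite-index
normal `Mᵢ ⊴ Gᵢ` with `Mᵢ ∩ N = P` and `M₁ ≤ K`. On the finite set `F = G₁/M₁ × G₂/M₂` both
`Gᵢ` act by left multiplication, and in both actions every point stabiliser in `N` is `P`; free
`N/P`-sets of the same size are isomorphic, so after conjugating the `G₂`-action the two actions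
agree on `N` and define an action of `G₁ ∗_N G₂` on `F` whose kernel meets `G₁` in `M₁ ≤ K`.
The case of `G₂` follows by swapping the factors.
-/

open Subgroup MulAction AmalgamatedProduct

universe u

theorem MonoidHom.finite_of_fg {N F : Type*} [Group N] [Group F] [Group.FG N] [Finite F] :
    Finite (N →* F) := by
  obtain ⟨S, hS, hSfin⟩ := Group.fg_iff.mp ‹Group.FG N›
  have := hSfin.to_subtype
  exact Finite.of_injective (fun φ : N →* F ↦ fun s : S ↦ φ s)
    fun φ ψ h ↦ MonoidHom.eq_of_eqOn_dense hS fun s hs ↦ congr_fun h ⟨s, hs⟩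

theorem Subgroup.exists_characteristic_finiteIndex_le {N : Type*} [Group N] [Group.FG N]
    (K : Subgroup N) [K.FiniteIndex] :
    ∃ P : Subgroup N, P.Characteristic ∧ P.FiniteIndex ∧ P ≤ K := by
  have := MonoidHom.finite_of_fg (N := N) (F := Equiv.Perm (N ⧸ K))
  -- Automorphisms of `N` permute the finitely many homomorphisms `N →* Perm (N ⧸ K)`, so the
  -- kernel of all of them at once is characteristic and of finite index.
  let Φ : N →* ((N →* Equiv.Perm (N ⧸ K)) → Equiv.Perm (N ⧸ K)) := MonoidHom.pi fun φ ↦ φ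
  have mem_ker : ∀ n, n ∈ Φ.ker ↔ ∀ φ : N →* Equiv.Perm (N ⧸ K), φ n = 1 := fun n ↦ by
    simp [Φ, funext_iff]
  refine ⟨Φ.ker, characteristic_iff_le_comap.mpr fun e n hn ↦ ?_, inferInstance, fun n hn ↦ ?_⟩
  · exact (mem_ker _).mpr fun φ ↦ (mem_ker n).mp hn (φ.comp e.toMonoidHom)
  · have h := congr($((mem_ker n).mp hn (MulAction.toPermHom N (N ⧸ K))) ((1 : N) : N ⧸ K))
    simpa [QuotientGroup.eq] using h

theorem Subgroup.map_normal_of_characteristic {N G : Type*} [Group N] [Group G] {f : N →* G}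
    (hf : Function.Injective f) [f.range.Normal] (P : Subgroup N) [P.Characteristic] :
    (P.map f).Normal := by
  constructor
  rintro _ ⟨p, hp, rfl⟩ g
  let e : N ≃* N :=
    (MonoidHom.ofInjective hf).trans ((MulAut.conjNormal g).trans (MonoidHom.ofInjective hf).symm)
  have he : f (e p) = g * f p * g⁻¹ := by
    simp [e, MonoidHom.ofInjective_apply]
  exact ⟨e p, characteristic_iff_le_comap.mp ‹_› e hp, he⟩

theorem Subgroup.finiteIndex_comap {G G' : Type*} [Group G] [Group G'] (f : G →* G')
    (L : Subgroup G') [L.FiniteIndex] : (L.comap f).FiniteIndex :=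
  ⟨(L.index_comap f).trans_ne (isFiniteRelIndex_of_finiteIndex (K := f.range)).relIndex_ne_zero⟩

theorem Subgroup.exists_normal_finiteIndex_comap_eq {N G : Type*} [Group N] [Group G]
    {f : N →* G} (hf : Function.Injective f) [f.range.Normal] (P : Subgroup N) [P.Characteristic]
    (W : Subgroup G) [W.FiniteIndex] (hW : W.comap f ≤ P) :
    ∃ M : Subgroup G, M.Normal ∧ M.FiniteIndex ∧ M ≤ W ⊔ P.map f ∧ M.comap f = P := by
  have := map_normal_of_characteristic hf P
  refine ⟨W.normalCore ⊔ P.map f, sup_normal _ _, finiteIndex_of_le le_sup_left,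
    sup_le_sup_right W.normalCore_le _, le_antisymm (fun n hn ↦ ?_)
      ((le_comap_map f P).trans (comap_mono le_sup_right))⟩
  obtain ⟨m, hm, _, ⟨p, hp, rfl⟩, hmp⟩ := mem_sup_of_normal_right.mp hn
  have : n * p⁻¹ ∈ P := hW <| by
    simpa [← hmp] using W.normalCore_le hm
  simpa using P.mul_mem this hp

theorem exists_quotient_prod_equiv_of_forall_apply_eq_self_iff {N : Type*} {X : Type u} [Group N]
    (P : Subgroup N) (ρ : N →* Equiv.Perm X) (h : ∀ n x, ρ n x = x ↔ n ∈ P) :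
    ∃ (Ω : Type u) (E : (N ⧸ P) × Ω ≃ X), ∀ n q ω, E (n • q, ω) = ρ n (E (q, ω)) := by
  let _ : MulAction N X := MulAction.compHom X ρ
  have hstab : ∀ x : X, stabilizer N x = P := fun x ↦ Subgroup.ext fun n ↦ h n x
  let E : (N ⧸ P) × orbitRel.Quotient N X → X := fun z ↦
    ofQuotientStabilizer N z.2.out (quotientEquivOfEq (hstab _).symm z.1)
  have E_mk : ∀ (n : N) ω, E (n, ω) = n • ω.out := fun _ _ ↦ rfl
  have orbit_out : ∀ x : X, ∃ n : N, n • (⟦x⟧ : orbitRel.Quotient N X).out = x := fun x ↦ by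
    obtain ⟨n, hn⟩ := orbitRel_apply.mp (Quotient.mk_out (s := orbitRel N X) x)
    exact ⟨n⁻¹, by rw [← hn, inv_smul_smul]⟩
  refine ⟨orbitRel.Quotient N X, Equiv.ofBijective E ⟨?_, fun x ↦ ?_⟩, ?_⟩
  · rintro ⟨q, ω⟩ ⟨q', ω'⟩ heq
    induction q using QuotientGroup.induction_on with | H n => ?_
    induction q' using QuotientGroup.induction_on with | H n' => ?_
    rw [E_mk, E_mk] at heq
    obtain rfl : ω = ω' := by
      rw [← Quotient.out_eq ω, ← Quotient.out_eq ω']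
      exact Quotient.sound ⟨n⁻¹ * n', by dsimp only; rw [mul_smul, ← heq, inv_smul_smul]⟩
    refine Prod.ext (QuotientGroup.eq.mpr ?_) rfl
    rw [← hstab ω.out, mem_stabilizer_iff, mul_smul, ← heq, inv_smul_smul]
  · obtain ⟨n, hn⟩ := orbit_out x
    exact ⟨(n, ⟦x⟧), hn⟩
  · rintro n q ω
    induction q using QuotientGroup.induction_on with | H m => ?_
    exact (E_mk _ _).trans (mul_smul n m _)

theorem exists_equiv_comm_of_forall_apply_eq_self_iff {N : Type*} {X Y : Type u} [Group N]
    (P : Subgroup N) [P.FiniteIndex] [Finite X] [Finite Y]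
    (ρ : N →* Equiv.Perm X) (σ : N →* Equiv.Perm Y)
    (hρ : ∀ n x, ρ n x = x ↔ n ∈ P) (hσ : ∀ n y, σ n y = y ↔ n ∈ P)
    (hcard : Nat.card X = Nat.card Y) :
    ∃ e : X ≃ Y, ∀ n x, e (ρ n x) = σ n (e x) := by
  obtain ⟨Ω, E, hE⟩ := exists_quotient_prod_equiv_of_forall_apply_eq_self_iff P ρ hρ
  obtain ⟨Ω', E', hE'⟩ := exists_quotient_prod_equiv_of_forall_apply_eq_self_iff P σ hσ
  have := Finite.of_equiv _ E.symm
  have := Finite.of_equiv _ E'.symm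
  have := Finite.prod_right (N ⧸ P) (β := Ω)
  have := Finite.prod_right (N ⧸ P) (β := Ω')
  have hΩ : Nat.card Ω = Nat.card Ω' := by
    rw [← Nat.card_congr E, ← Nat.card_congr E', Nat.card_prod, Nat.card_prod] at hcard
    exact Nat.eq_of_mul_eq_mul_left (Nat.pos_of_ne_zero (FiniteIndex.index_ne_zero (H := P))) hcard
  obtain ⟨u⟩ := Finite.card_eq.mp hΩ
  refine ⟨E.symm.trans ((Equiv.prodCongr (Equiv.refl _) u).trans E'), fun n x ↦ ?_⟩
  obtain ⟨⟨q, ω⟩, rfl⟩ := E.surjective x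
  simp [← hE, hE']

theorem TopologicallyEmbeddedVia.of_comp {H G G' : Type*} [Group H] [Group G] [Group G']
    {f : H →* G} {g : G →* G'} (h : TopologicallyEmbeddedVia (g.comp f)) :
    TopologicallyEmbeddedVia f := fun K hK ↦ by
  obtain ⟨L, hL, hLK⟩ := h K hK
  exact ⟨L.comap g, L.finiteIndex_comap g, hLK⟩

namespace AmalgamatedProduct

variable {H G₁ G₂ M : Type*} [Group H] [Group G₁] [Group G₂] [Group M]
  {f₁ : H →* G₁} {f₂ : H →* G₂}

theorem inl_comp_eq_inr_comp : (inl f₁ f₂).comp f₁ = (inr f₁ f₂).comp f₂ := by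
  ext h
  refine (QuotientGroup.eq_iff_div_mem).mpr (subset_normalClosure ⟨h, ?_⟩)
  simp [div_eq_mul_inv]

def lift (φ₁ : G₁ →* M) (φ₂ : G₂ →* M) (h : φ₁.comp f₁ = φ₂.comp f₂) :
    AmalgamatedProduct f₁ f₂ →* M :=
  QuotientGroup.lift _ (Monoid.Coprod.lift φ₁ φ₂) <| normalClosure_le_normal <| by
    rintro _ ⟨n, rfl⟩
    simpa [mul_inv_eq_one] using DFunLike.congr_fun h n

@[simp]
theorem lift_comp_inl (φ₁ : G₁ →* M) (φ₂ : G₂ →* M) (h : φ₁.comp f₁ = φ₂.comp f₂) :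
    (lift φ₁ φ₂ h).comp (inl f₁ f₂) = φ₁ :=
  rfl

@[simp]
theorem lift_comp_inr (φ₁ : G₁ →* M) (φ₂ : G₂ →* M) (h : φ₁.comp f₁ = φ₂.comp f₂) :
    (lift φ₁ φ₂ h).comp (inr f₁ f₂) = φ₂ :=
  Monoid.Coprod.lift_comp_inr φ₁ φ₂

theorem exists_perm_ker_comp_inl_eq {F : Type*} [Group F] [Finite F] (π₁ : G₁ →* F)
    (π₂ : G₂ →* F) (hπ : (π₁.comp f₁).ker = (π₂.comp f₂).ker) :
    ∃ φ : AmalgamatedProduct f₁ f₂ →* Equiv.Perm F, (φ.comp (inl f₁ f₂)).ker = π₁.ker := by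
  let reg := MulAction.toPermHom F F
  have reg_apply_eq_self : ∀ a x : F, reg a x = x ↔ a = 1 := fun _ _ ↦ mul_eq_right
  have reg_ker : reg.ker = ⊥ := (MonoidHom.ker_eq_bot_iff _).mpr fun a b hab ↦ by
    simpa [reg] using congr($hab 1)
  obtain ⟨e, he⟩ := exists_equiv_comm_of_forall_apply_eq_self_iff (π₁.comp f₁).ker
    (reg.comp (π₁.comp f₁)) (reg.comp (π₂.comp f₂)) (by simp [reg_apply_eq_self])
    (by simp [hπ, reg_apply_eq_self]) rfl
  -- conjugating by `e` makes the two actions agree on `H`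
  let φ₂ := (MulAut.conj e⁻¹).toMonoidHom.comp (reg.comp π₂)
  have hφ : (reg.comp π₁).comp f₁ = φ₂.comp f₂ := by
    ext n x
    simpa [φ₂, Equiv.eq_symm_apply] using he n x
  refine ⟨lift _ φ₂ hφ, ?_⟩
  rw [lift_comp_inl, ← MonoidHom.comap_ker, reg_ker, MonoidHom.comap_bot]

theorem topologicallyEmbeddedVia_inl
    (hf₁ : Function.Injective f₁) (hf₂ : Function.Injective f₂) [Group.FG H]
    [f₁.range.Normal] [f₂.range.Normal]
    (ht₁ : TopologicallyEmbeddedVia f₁) (ht₂ : TopologicallyEmbeddedVia f₂) :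
    TopologicallyEmbeddedVia (inl f₁ f₂) := by
  intro K hK
  have := K.finiteIndex_comap f₁
  obtain ⟨P, hPchar, hPfin, hPK⟩ := exists_characteristic_finiteIndex_le (K.comap f₁)
  obtain ⟨L₁, hL₁, hL₁P⟩ := ht₁ P hPfin
  obtain ⟨L₂, hL₂, hL₂P⟩ := ht₂ P hPfin
  obtain ⟨M₁, hM₁, hM₁fin, hM₁K, hM₁P⟩ :=
    exists_normal_finiteIndex_comap_eq hf₁ P (K ⊓ L₁) ((comap_mono inf_le_right).trans hL₁P)
  obtain ⟨M₂, hM₂, hM₂fin, -, hM₂P⟩ := exists_normal_finiteIndex_comap_eq hf₂ P L₂ hL₂P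
  let π₁ := (MonoidHom.inl _ (G₂ ⧸ M₂)).comp (QuotientGroup.mk' M₁)
  let π₂ := (MonoidHom.inr (G₁ ⧸ M₁) _).comp (QuotientGroup.mk' M₂)
  have ker_π₁ : π₁.ker = M₁ := by ext; simp [π₁]
  have ker_π₂ : π₂.ker = M₂ := by ext; simp [π₂]
  obtain ⟨φ, hφ⟩ := exists_perm_ker_comp_inl_eq (f₁ := f₁) (f₂ := f₂) π₁ π₂ <| by
    rw [← MonoidHom.comap_ker π₁, ← MonoidHom.comap_ker π₂, ker_π₁, ker_π₂, hM₁P, hM₂P]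
  refine ⟨φ.ker, finiteIndex_ker φ, ?_⟩
  rw [MonoidHom.comap_ker, hφ, ker_π₁]
  exact hM₁K.trans (sup_le inf_le_left (map_le_iff_le_comap.mpr hPK))

end AmalgamatedProduct

/-- If `N` is a finitely generated common subgroup of `G₁` and `G₂` which is normal and
topologically embedded in both, then `G₁` and `G₂` are each topologically embedded in
the amalgamated free product `G₁ ∗_N G₂`. -/
theorem statement3 {N G₁ G₂ : Type*} [Group N] [Group G₁] [Group G₂]
    (f₁ : N →* G₁) (f₂ : N →* G₂)
    (hf₁ : Function.Injective f₁) (hf₂ : Function.Injective f₂)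
    (hfg : Group.FG N) (hn₁ : f₁.range.Normal) (hn₂ : f₂.range.Normal)
    (ht₁ : TopologicallyEmbeddedVia f₁) (ht₂ : TopologicallyEmbeddedVia f₂) :
    TopologicallyEmbeddedVia (AmalgamatedProduct.inl f₁ f₂) ∧
      TopologicallyEmbeddedVia (AmalgamatedProduct.inr f₁ f₂) := by
  have := hfg
  have := hn₁
  have := hn₂
  refine ⟨topologicallyEmbeddedVia_inl hf₁ hf₂ ht₁ ht₂, ?_⟩
  refine TopologicallyEmbeddedVia.of_comp
    (g := lift (inr f₂ f₁) (inl f₂ f₁) inl_comp_eq_inr_comp.symm) ?_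
  rw [lift_comp_inr]
  exact topologicallyEmbeddedVia_inl hf₂ hf₁ ht₂ ht₁
end

section
/- Let G be a finitely generated highly residually finite group. If φ : G → G is an injective homomorphism with property 𝔓, then the ascending HNN extension G_φ is highly residually finite. -/
/-- A group `G` is residually finite if every nontrivial element avoids some
finite-index normal subgroup. -/
def ResiduallyFinite (G : Type*) [Group G] : Prop :=
  ∀ g : G, g ≠ 1 → ∃ N : Subgroup G, N.Normal ∧ N.FiniteIndex ∧ g ∉ N

/-- A group `Q` is highly residually finite if for every group extension
`1 → F → E → Q → 1` with `F` finite, the group `E` is residually finite. -/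
def HighlyResiduallyFinite (Q : Type*) [Group Q] : Prop :=
  ∀ (E F : Type*) [Group E] [Group F], Finite F →
    ∀ (ι : F →* E) (π : E →* Q), Function.Injective ι → Function.Surjective π →
      π.ker = ι.range → ResiduallyFinite E

/-- An endomorphism `φ` of `G` has property 𝔓 if for every `g ∈ G` there is a
finite-index normal subgroup `N` such that for all `i ≥ 0`, `φ^i(g) ∈ N ↔ φ^i(g) = 1`. -/
def PropertyP {G : Type*} [Group G] (φ : G →* G) : Prop :=
  ∀ g : G, ∃ N : Subgroup G, N.Normal ∧ N.FiniteIndex ∧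
    ∀ i : ℕ, ((⇑φ)^[i] g ∈ N ↔ (⇑φ)^[i] g = 1)

/-- The ascending HNN extension of `G` with respect to an injective endomorphism `φ`:
the group `⟨G, t | t⁻¹ g t = φ(g) for all g ∈ G⟩`, realized as the HNN extension of `G`
with associated subgroups `φ.range` and `⊤` (so that `t⁻¹ (of g) t = of (φ g)`). -/
noncomputable abbrev AscendingHNNExtension {G : Type*} [Group G] (φ : G →* G)
    (hφ : Function.Injective φ) : Type _ :=
  HNNExtension G φ.range ⊤ ((MonoidHom.ofInjective hφ).symm.trans Subgroup.topEquiv.symm)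

/-!
Property 𝔓 and finite generation of `G` give, for `g ≠ 1`, a `φ`-invariant finite-index normal
subgroup `D` avoiding the whole orbit `φⁱ(g)`: intersect the kernels of the maps `x ↦ φⁱ(x) M`,
of which there are only finitely many. The endomorphism induced on the finite group `G/D` is a
bijection `α` of its eventual image `I`, so `G_φ` acts on `I`, with `G` translating and `t` acting
by `α⁻¹`; this action detects `g`. Together with the exponent sum of `t`, this makes `G_φ`
residually finite.

Given `1 → F → E → G_φ → 1` with `F` finite, the preimage `H` of `G` is a finitely generated
extension of `G` by a finite group, hence residually finite. Conjugation by a lift `τ` of `t` is an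
injective endomorphism `ψ` of `H` that inherits property 𝔓 from `φ`, and `E ≅ H_ψ`; applying the
first part to `H_ψ` shows that `E` is residually finite.
-/

theorem exists_normal_finiteIndex_notMem_of_map_ne_one {X K : Type*} [Group X] [Group K]
    [Finite K] (f : X →* K) {x : X} (hx : f x ≠ 1) :
    ∃ N : Subgroup X, N.Normal ∧ N.FiniteIndex ∧ x ∉ N :=
  ⟨f.ker, inferInstance, inferInstance, hx⟩

instance Subgroup.finiteIndex_comap_s13 {X Y : Type*} [Group X] [Group Y] (N : Subgroup Y)
    [N.FiniteIndex] (f : X →* Y) : (N.comap f).FiniteIndex :=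
  ⟨by rw [Subgroup.index_comap]; exact Subgroup.FiniteIndex.index_ne_zero⟩

theorem Group.finite_monoidHom_of_fg (G K : Type*) [Group G] [Group K] [Group.FG G] [Finite K] :
    Finite (G →* K) := by
  obtain ⟨α, _, p, hp⟩ := Group.fg_iff_exists_freeGroup_hom_surjective_finite.mp ‹_›
  refine Finite.of_injective (fun f : G →* K => fun a => f (p (FreeGroup.of a))) fun f f' h => ?_
  exact (MonoidHom.cancel_right hp).mp (FreeGroup.ext_hom _ _ fun a => congrFun h a)

theorem Group.countable_of_fg (G : Type*) [Group G] [Group.FG G] : Countable G := by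
  obtain ⟨α, _, p, hp⟩ := Group.fg_iff_exists_freeGroup_hom_surjective_finite.mp ‹_›
  exact hp.countable

theorem Group.fg_of_surjective_of_fg_ker {H K : Type*} [Group H] [Group K] [Group.FG K]
    (p : H →* K) (hp : Function.Surjective p) [Group.FG p.ker] : Group.FG H := by
  obtain ⟨S, hS, hSfin⟩ := Group.fg_iff.mp ‹Group.FG K›
  have hT : Subgroup.closure (Function.surjInv hp '' S) ⊔ p.ker = ⊤ := by
    rw [← Subgroup.comap_map_eq, MonoidHom.map_closure, ← Set.image_comp,
      Function.comp_surjInv hp, Set.image_id, hS, Subgroup.comap_top]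
  rw [Group.fg_def, ← hT]
  exact Subgroup.FG.sup ⟨(hSfin.image (Function.surjInv hp)).toFinset, by simp⟩
    ((Group.fg_iff_subgroup_fg _).mp ‹_›)

theorem ResiduallyFinite.of_injective {X Y : Type*} [Group X] [Group Y]
    (hY : ResiduallyFinite Y) (f : X →* Y) (hf : Function.Injective f) : ResiduallyFinite X :=
  fun x hx => by
    obtain ⟨N, hN, _, hxN⟩ := hY (f x) ((map_ne_one_iff f hf).mpr hx)
    exact ⟨N.comap f, hN.comap f, inferInstance, hxN⟩

theorem ResiduallyFinite.exists_normal_finiteIndex_inf_eq_bot {X : Type*} [Group X]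
    (hX : ResiduallyFinite X) (K : Subgroup X) [Finite K] :
    ∃ N : Subgroup X, N.Normal ∧ N.FiniteIndex ∧ N ⊓ K = ⊥ := by
  choose N hN hNf hkN using fun k : {k : K // k ≠ 1} => hX k.1 (by simpa using k.2)
  refine ⟨⨅ k, N k, Subgroup.normal_iInf_normal hN, Subgroup.finiteIndex_iInf hNf, ?_⟩
  refine eq_bot_iff.mpr fun x ⟨hxN, hxK⟩ => Subgroup.mem_bot.mpr (not_not.mp fun hx => ?_)
  exact hkN ⟨⟨x, hxK⟩, by simpa using hx⟩ (Subgroup.mem_iInf.mp hxN _)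

universe u v in
theorem HighlyResiduallyFinite.residuallyFinite_of_surjective {Q : Type*} [Group Q]
    (hQ : HighlyResiduallyFinite.{_, u, v} Q) {E : Type*} [Group E] [Countable E] (π : E →* Q)
    (hπ : Function.Surjective π) [Finite π.ker] : ResiduallyFinite E := by
  -- `hQ` only covers extensions in the universes `u` and `v`, so `E` and `π.ker` are shrunk.
  let eE : Shrink.{u} E ≃* E := Shrink.mulEquiv
  let eK : Shrink.{v} π.ker ≃* π.ker := Shrink.mulEquiv
  refine (hQ _ _ (.of_equiv _ eK.symm.toEquiv) (eE.symm.toMonoidHom.comp (π.ker.subtype.comp eK))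
    (π.comp eE) ?_ (hπ.comp eE.surjective) ?_).of_injective eE.symm.toMonoidHom eE.symm.injective
  · exact eE.symm.injective.comp (Subtype.val_injective.comp eK.injective)
  · ext x
    refine ⟨fun hx => ⟨eK.symm ⟨eE x, hx⟩, by simp⟩, ?_⟩
    rintro ⟨k, rfl⟩
    simpa using MonoidHom.mem_ker.mp (eK k).2

theorem PropertyP.of_semiconj {G H : Type*} [Group G] [Group H] {φ : G →* G} {ψ : H →* H}
    (hP : PropertyP φ) (hH : ResiduallyFinite H) (p : H →* G) [Finite p.ker]
    (hp : ∀ x, p (ψ x) = φ (p x)) : PropertyP ψ := by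
  intro x
  obtain ⟨M, hM, _, hMp⟩ := hH.exists_normal_finiteIndex_inf_eq_bot p.ker
  obtain ⟨N, hN, _, hNx⟩ := hP (p x)
  have hiter (i : ℕ) : p ((⇑ψ)^[i] x) = (⇑φ)^[i] (p x) := Function.Semiconj.iterate_right hp i x
  have := hN.comap p
  refine ⟨N.comap p ⊓ M, inferInstance, inferInstance,
    fun i => ⟨fun ⟨hiN, hiM⟩ => ?_, fun h => h ▸ one_mem _⟩⟩
  have hik : (⇑ψ)^[i] x ∈ p.ker := by
    rw [MonoidHom.mem_ker, hiter, ← hNx i, ← hiter]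
    exact hiN
  exact Subgroup.mem_bot.mp (hMp ▸ ⟨hiM, hik⟩)

theorem MonoidHom.exists_mulEquiv_semiconj_iterate {Q : Type*} [Group Q] [Finite Q]
    (ψ : Q →* Q) : ∃ (I : Subgroup Q) (ρ : Q →* I) (α : I ≃* I) (n : ℕ),
      (∀ x, α (ρ x) = ρ (ψ x)) ∧ ∀ x, (ρ x : Q) = (⇑ψ)^[n] x := by
  let ψ' : Monoid.End Q := ψ
  have : Finite (Monoid.End Q) := Finite.of_injective _ DFunLike.coe_injective
  obtain ⟨s, r, hr, hsr⟩ : ∃ s r : ℕ, 0 < r ∧ ψ' ^ (s + r) = ψ' ^ s := by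
    obtain ⟨i, j, hij, heq⟩ := Finite.exists_ne_map_eq_of_infinite (ψ' ^ · : ℕ → Monoid.End Q)
    rcases hij.lt_or_gt with h | h
    · exact ⟨i, j - i, by omega, by rw [Nat.add_sub_cancel' h.le]; exact heq.symm⟩
    · exact ⟨j, i - j, by omega, by rw [Nat.add_sub_cancel' h.le]; exact heq⟩
  have hcomm (y : Q) : ψ ((ψ' ^ s) y) = (ψ' ^ s) (ψ y) :=
    DFunLike.congr_fun (Commute.self_pow ψ' s).eq y
  let I := MonoidHom.range (ψ' ^ s)
  let α : I →* I := (ψ.comp I.subtype).codRestrict _ fun ⟨_, y, hy⟩ =>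
    ⟨ψ y, by subst hy; exact (hcomm y).symm⟩
  have hα : Function.Surjective α := by
    rintro ⟨_, v, rfl⟩
    refine ⟨⟨(ψ' ^ s) ((ψ' ^ (r - 1)) v), _, rfl⟩, Subtype.ext ?_⟩
    change (ψ' * ψ' ^ s * ψ' ^ (r - 1)) v = (ψ' ^ s) v
    rw [← pow_succ', ← pow_add, show s + 1 + (r - 1) = s + r by omega, hsr]
  exact ⟨I, MonoidHom.rangeRestrict (ψ' ^ s),
    .ofBijective α ⟨Finite.injective_iff_surjective.mpr hα, hα⟩, s,
    fun x => Subtype.ext (hcomm x), fun _ => rfl⟩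

theorem exists_invariant_normal_finiteIndex_le {G : Type*} [Group G] [Group.FG G]
    (φ : G →* G) (M : Subgroup G) [M.Normal] [M.FiniteIndex] :
    ∃ D : Subgroup G, D.Normal ∧ D.FiniteIndex ∧ D ≤ M ∧ D ≤ D.comap φ := by
  have := Group.finite_monoidHom_of_fg G (G ⧸ M)
  let ψ : Monoid.End G := φ
  let f (i : ℕ) : G →* G ⧸ M := (QuotientGroup.mk' M).comp (ψ ^ i)
  have mem_ker_f (i : ℕ) (x : G) : x ∈ (f i).ker ↔ (⇑φ)^[i] x ∈ M := by
    change QuotientGroup.mk' M ((ψ ^ i) x) = 1 ↔ _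
    rw [QuotientGroup.mk'_apply, QuotientGroup.eq_one_iff, Monoid.End.coe_pow]
    rfl
  refine ⟨⨅ i, (f i).ker, Subgroup.normal_iInf_normal fun i => (f i).normal_ker, ?_,
    fun x hx => ?_, fun x hx => Subgroup.mem_iInf.mpr fun i => ?_⟩
  · rw [← iInf_range' MonoidHom.ker f]
    exact Subgroup.finiteIndex_iInf fun _ => inferInstance
  · exact (mem_ker_f 0 x).mp (Subgroup.mem_iInf.mp hx 0)
  · exact (mem_ker_f i _).mpr ((mem_ker_f (i + 1) x).mp (Subgroup.mem_iInf.mp hx (i + 1)))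

namespace AscendingHNNExtension

variable {G : Type*} [Group G] {φ : G →* G} {hφ : Function.Injective φ}

noncomputable abbrev of : G →* AscendingHNNExtension φ hφ := HNNExtension.of

noncomputable abbrev t : AscendingHNNExtension φ hφ := HNNExtension.t

theorem of_injective : Function.Injective (of : G →* AscendingHNNExtension φ hφ) :=
  HNNExtension.of_injective _

theorem of_mul_t (g : G) : (of g : AscendingHNNExtension φ hφ) * t = t * of (φ g) := by
  simpa [MonoidHom.ofInjective_apply] using HNNExtension.of_mul_t
    (φ := (MonoidHom.ofInjective hφ).symm.trans Subgroup.topEquiv.symm) ⟨g, Subgroup.mem_top g⟩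

theorem inv_t_mul_of_mul_t (g : G) :
    (t : AscendingHNNExtension φ hφ)⁻¹ * of g * t = of (φ g) := by
  rw [mul_assoc, of_mul_t, inv_mul_cancel_left]

theorem of_mul_t_pow (n : ℕ) (g : G) :
    (of g : AscendingHNNExtension φ hφ) * t ^ n = t ^ n * of ((⇑φ)^[n] g) := by
  induction n generalizing g with
  | zero => simp
  | succ n ih => rw [pow_succ', ← mul_assoc, of_mul_t, mul_assoc, ih, ← mul_assoc,
      Function.iterate_succ_apply]

theorem inv_t_pow_mul_of (n : ℕ) (g : G) :
    ((t : AscendingHNNExtension φ hφ) ^ n)⁻¹ * of g = of ((⇑φ)^[n] g) * (t ^ n)⁻¹ := by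
  rw [inv_mul_eq_iff_eq_mul, ← mul_assoc, eq_mul_inv_iff_mul_eq, of_mul_t_pow]

variable (φ hφ) in
noncomputable def lift {X : Type*} [Group X] (f : G →* X) (τ : X)
    (hf : ∀ g, τ * f (φ g) = f g * τ) : AscendingHNNExtension φ hφ →* X :=
  HNNExtension.lift f τ fun a => by
    obtain ⟨g, rfl⟩ := (MonoidHom.ofInjective hφ).surjective a
    simpa [MonoidHom.ofInjective_apply] using hf g

section lift

variable {X : Type*} [Group X] (f : G →* X) (τ : X) (hf : ∀ g, τ * f (φ g) = f g * τ)

@[simp] theorem lift_of (g : G) : lift φ hφ f τ hf (of g) = f g := HNNExtension.lift_of ..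

@[simp] theorem lift_t : lift φ hφ f τ hf t = τ := HNNExtension.lift_t ..

end lift

theorem exists_eq_t_pow_mul_of_mul_inv_t_pow (x : AscendingHNNExtension φ hφ) :
    ∃ a b : ℕ, ∃ g : G, x = t ^ a * of g * (t ^ b)⁻¹ := by
  let S := {y : AscendingHNNExtension φ hφ | ∃ a b : ℕ, ∃ g : G, y = t ^ a * of g * (t ^ b)⁻¹}
  have mul_of_mem : ∀ y ∈ S, ∀ h, y * of h ∈ S := by
    rintro _ ⟨a, b, g, rfl⟩ h
    refine ⟨a, b, g * (⇑φ)^[b] h, ?_⟩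
    rw [mul_assoc, inv_t_pow_mul_of, map_mul]
    group
  have mul_t_mem : ∀ y ∈ S, y * t ∈ S := by
    rintro _ ⟨a, _ | b, g, rfl⟩
    · exact ⟨a + 1, 0, φ g, by rw [pow_zero, inv_one, mul_one, mul_one, mul_assoc, of_mul_t,
        ← mul_assoc, ← pow_succ]⟩
    · exact ⟨a, b, g, by group⟩
  have mul_inv_t_mem : ∀ y ∈ S, y * t⁻¹ ∈ S := by
    rintro _ ⟨a, b, g, rfl⟩
    exact ⟨a, b + 1, g, by group⟩
  suffices h : ∀ y ∈ S, y * x ∈ S ∧ y * x⁻¹ ∈ S by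
    exact one_mul x ▸ (h 1 ⟨0, 0, 1, by simp⟩).1
  induction x using HNNExtension.induction_on with
  | of g => exact fun y hy => ⟨mul_of_mem y hy g, by simpa using mul_of_mem y hy g⁻¹⟩
  | t => exact fun y hy => ⟨mul_t_mem y hy, mul_inv_t_mem y hy⟩
  | mul x z hx hz =>
    refine fun y hy => ⟨?_, ?_⟩
    · simpa only [mul_assoc] using (hz _ (hx y hy).1).1
    · simpa only [mul_inv_rev, mul_assoc] using (hx _ (hz y hy).2).2
  | inv x hx => exact fun y hy => by simpa only [inv_inv] using (hx y hy).symm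

variable (φ hφ) in
noncomputable def tExponent : AscendingHNNExtension φ hφ →* Multiplicative ℤ :=
  lift φ hφ 1 (Multiplicative.ofAdd 1) fun _ => by simp

theorem tExponent_t_pow_mul_of_mul_inv_t_pow (a b : ℕ) (g : G) :
    tExponent φ hφ (t ^ a * of g * (t ^ b)⁻¹) = Multiplicative.ofAdd ((a : ℤ) - b) := by
  simp [tExponent, ← ofAdd_nsmul, ← ofAdd_neg, ← ofAdd_add, sub_eq_add_neg]

theorem exists_normal_finiteIndex_of_semiconj {K : Type*} [Group K] [Finite K] (f : G →* K)
    (α : K ≃* K) (hf : ∀ x, f (φ x) = α (f x)) :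
    ∃ N : Subgroup (AscendingHNNExtension φ hφ), N.Normal ∧ N.FiniteIndex ∧
      ∀ x, of x ∈ N → f x = 1 := by
  let Φ := lift φ hφ ((MulAction.toPermHom K K).comp f) α.symm.toEquiv fun x =>
    Equiv.ext fun y => by simp [hf]
  refine ⟨Φ.ker, inferInstance, inferInstance, fun x hx => ?_⟩
  simpa [Φ] using congr($hx (1 : K))

theorem exists_normal_finiteIndex_of_notMem_iterate (D : Subgroup G) [D.Normal]
    [D.FiniteIndex] (hD : D ≤ D.comap φ) {g : G} (hg : ∀ i, (⇑φ)^[i] g ∉ D) :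
    ∃ N : Subgroup (AscendingHNNExtension φ hφ), N.Normal ∧ N.FiniteIndex ∧ of g ∉ N := by
  let ψ : G ⧸ D →* G ⧸ D := QuotientGroup.map D D φ hD
  obtain ⟨I, ρ, α, n, hα, hρ⟩ := ψ.exists_mulEquiv_semiconj_iterate
  obtain ⟨N, hN, hNf, hNρ⟩ := exists_normal_finiteIndex_of_semiconj (hφ := hφ)
    (ρ.comp (QuotientGroup.mk' D)) α fun x => (hα x).symm
  refine ⟨N, hN, hNf, fun hgN => hg n ?_⟩
  have h := congr_arg Subtype.val (hNρ g hgN)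
  rw [MonoidHom.comp_apply, hρ, QuotientGroup.mk'_apply, ← Function.Semiconj.iterate_right
    (f := ((↑) : G → G ⧸ D)) (ga := φ) (gb := ψ) (fun _ => rfl)] at h
  exact (QuotientGroup.eq_one_iff _).mp h

theorem exists_normal_finiteIndex_of_ne_one [Group.FG G] (hP : PropertyP φ) {g : G}
    (hg : g ≠ 1) :
    ∃ N : Subgroup (AscendingHNNExtension φ hφ), N.Normal ∧ N.FiniteIndex ∧ of g ∉ N := by
  obtain ⟨M, _, _, hgM⟩ := hP g
  obtain ⟨D, _, _, hDM, hDφ⟩ := exists_invariant_normal_finiteIndex_le φ M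
  refine exists_normal_finiteIndex_of_notMem_iterate D hDφ fun i hi => hg ?_
  exact hφ.iterate i (((hgM i).mp (hDM hi)).trans (iterate_map_one φ i).symm)

theorem residuallyFinite [Group.FG G] (hP : PropertyP φ) :
    ResiduallyFinite (AscendingHNNExtension φ hφ) := by
  intro x hx
  obtain ⟨a, b, g, rfl⟩ := exists_eq_t_pow_mul_of_mul_inv_t_pow x
  obtain rfl | hab := eq_or_ne a b
  · obtain ⟨N, hN, hNf, hgN⟩ := exists_normal_finiteIndex_of_ne_one hP (hφ := hφ)
      (g := g) (by rintro rfl; simp at hx)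
    exact ⟨N, hN, hNf, fun hxN => hgN (by simpa [mul_assoc] using hN.conj_mem _ hxN (t ^ a)⁻¹)⟩
  · refine exists_normal_finiteIndex_notMem_of_map_ne_one
      ((Int.castAddHom (ZMod (a + b + 1))).toMultiplicative.comp (tExponent φ hφ)) fun h => hab ?_
    rw [MonoidHom.comp_apply, tExponent_t_pow_mul_of_mul_inv_t_pow] at h
    have hab' : (a : ZMod (a + b + 1)) = b := by
      simpa [sub_eq_zero] using congr_arg Multiplicative.toAdd h
    exact ((ZMod.natCast_eq_natCast_iff _ _ _).mp hab').eq_of_lt_of_lt (by omega) (by omega)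

theorem injective_of_injective_comp_of {X : Type*} [Group X]
    (Θ : AscendingHNNExtension φ hφ →* X) (hΘ : Function.Injective (Θ.comp of))
    (χ : X →* Multiplicative ℤ) (hχ : χ.comp Θ = tExponent φ hφ) : Function.Injective Θ := by
  refine (injective_iff_map_eq_one Θ).mpr fun x hx => ?_
  obtain ⟨a, b, g, rfl⟩ := exists_eq_t_pow_mul_of_mul_inv_t_pow x
  obtain rfl : a = b := by
    have h := congr(χ $hx)
    rw [← MonoidHom.comp_apply, hχ, tExponent_t_pow_mul_of_mul_inv_t_pow, map_one] at h
    have h' : (a : ℤ) - b = 0 := congr_arg Multiplicative.toAdd h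
    omega
  have hg : Θ.comp of g = Θ.comp of 1 := by
    simpa [mul_inv_eq_one, mul_eq_one_iff_eq_inv] using hx
  simp [hΘ hg]

section Extension

variable {E : Type*} [Group E] (π : E →* AscendingHNNExtension φ hφ)

noncomputable def basePreimage : Subgroup E :=
  (of : G →* AscendingHNNExtension φ hφ).range.comap π

noncomputable def baseProj : basePreimage π →* G :=
  (MonoidHom.ofInjective (of_injective (hφ := hφ))).symm.toMonoidHom.comp
    ((π.comp (basePreimage π).subtype).codRestrict _ fun x => x.2)

theorem of_baseProj (x : basePreimage π) : of (baseProj π x) = π x :=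
  MonoidHom.apply_ofInjective_symm (of_injective (hφ := hφ)) _

theorem baseProj_surjective (hπ : Function.Surjective π) :
    Function.Surjective (baseProj π) := fun g => by
  obtain ⟨e, he⟩ := hπ (of g)
  exact ⟨⟨e, g, he.symm⟩, of_injective (by rw [of_baseProj, he])⟩

theorem finite_ker_baseProj [Finite π.ker] : Finite (baseProj π).ker :=
  Finite.of_injective (fun x => (⟨x, by
      rw [MonoidHom.mem_ker, ← of_baseProj, MonoidHom.mem_ker.mp x.2, map_one]⟩ : π.ker))
    fun x y h => Subtype.ext (Subtype.ext congr(($h : E)))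

variable {π} {τ : E}

theorem conj_mem_basePreimage (hτ : π τ = t) {x : E} (hx : x ∈ basePreimage π) :
    τ⁻¹ * x * τ ∈ basePreimage π := by
  obtain ⟨g, hg⟩ := hx
  exact ⟨φ g, by simp [hτ, ← hg, inv_t_mul_of_mul_t]⟩

noncomputable def conjBase (hτ : π τ = t) : basePreimage π →* basePreimage π :=
  ((MulAut.conj τ⁻¹).toMonoidHom.comp (basePreimage π).subtype).codRestrict _
    fun x => by simpa using conj_mem_basePreimage hτ x.2

theorem coe_conjBase (hτ : π τ = t) (x : basePreimage π) :
    (conjBase hτ x : E) = τ⁻¹ * x * τ := by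
  simp [conjBase]

theorem conjBase_injective (hτ : π τ = t) : Function.Injective (conjBase hτ) :=
  fun x y h => Subtype.ext (by simpa [coe_conjBase] using congr(($h : E)))

theorem baseProj_conjBase (hτ : π τ = t) (x : basePreimage π) :
    baseProj π (conjBase hτ x) = φ (baseProj π x) :=
  of_injective (by rw [of_baseProj, coe_conjBase, map_mul, map_mul, map_inv, hτ,
    ← of_baseProj, inv_t_mul_of_mul_t])

theorem mul_conjBase (hτ : π τ = t) (x : basePreimage π) :
    τ * (basePreimage π).subtype (conjBase hτ x) = (basePreimage π).subtype x * τ := by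
  simp [coe_conjBase, mul_assoc]

theorem lift_conjBase_bijective (hτ : π τ = t) :
    Function.Bijective
      (lift _ (conjBase_injective hτ) (basePreimage π).subtype τ (mul_conjBase hτ)) := by
  refine ⟨injective_of_injective_comp_of _ (fun x y h => Subtype.ext (by simpa using h))
    ((tExponent φ hφ).comp π) (HNNExtension.hom_ext ?_ ?_), fun e => ?_⟩
  · ext x
    simp [← of_baseProj, tExponent]
  · simp [hτ, tExponent]
  · obtain ⟨a, b, g, hg⟩ := exists_eq_t_pow_mul_of_mul_inv_t_pow (π e)
    have hmem : (τ ^ a)⁻¹ * e * τ ^ b ∈ basePreimage π := ⟨g, by simp [hτ, hg, mul_assoc]⟩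
    exact ⟨t ^ a * of ⟨_, hmem⟩ * (t ^ b)⁻¹, by simp [mul_assoc]⟩

end Extension

end AscendingHNNExtension

open AscendingHNNExtension

/-- If `G` is a finitely generated highly residually finite group and `φ : G → G` is a
monomorphism with property 𝔓, then the ascending HNN extension `G_φ` is highly
residually finite. -/
theorem statement13 {G : Type*} [Group G] (hfg : Group.FG G)
    (hG : HighlyResiduallyFinite G) (φ : G →* G) (hφ : Function.Injective φ)
    (hP : PropertyP φ) :
    HighlyResiduallyFinite (AscendingHNNExtension φ hφ) := by
  intro E F _ _ _ ι π _ hπ hker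
  have : Finite π.ker := hker ▸ (Set.finite_range ι).to_subtype
  have := finite_ker_baseProj π
  have : Group.FG (basePreimage π) :=
    Group.fg_of_surjective_of_fg_ker (baseProj π) (baseProj_surjective π hπ)
  have := Group.countable_of_fg (basePreimage π)
  obtain ⟨τ, hτ⟩ := hπ t
  have hψ : PropertyP (conjBase hτ) :=
    hP.of_semiconj (hG.residuallyFinite_of_surjective _ (baseProj_surjective π hπ)) _
      (baseProj_conjBase hτ)
  exact (residuallyFinite hψ).of_injective
    (MulEquiv.ofBijective _ (lift_conjBase_bijective hτ)).symm.toMonoidHom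
    (MulEquiv.injective _)
end
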